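/- Let I be a stable monomial ideal in the skew polynomial ring R, and let J_q ⊆ K_q(I) be the free submodule spanned by the symbols e(i_1,…,i_q;u) with i_q ≥ max(u). Then D(J_q) ⊆ J_{q−1}, so (J_•(I), D) is a subcomplex of (K_•(I), D); moreover, for e(σ;u) ∈ J_q the q-th summand of D(e(σ;u)) vanishes, and the quotient complex K_•(I)/J_•(I) is the skew Eliahou–Kervaire complex (L_•(I), d). -/

import Mathlib

open Finsupp

/-- Exponent vectors of monomials in `n` variables. -/
abbrev NExp (n : ℕ) := Fin n →₀ ℕ

/-- Integer exponent vectors (for Laurent-type arguments of the bicharacter `C`). -/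
abbrev ZExp (n : ℕ) := Fin n →₀ ℤ

/-- Canonical inclusion of `ℕ`-exponent vectors into `ℤ`-exponent vectors. -/
noncomputable def zc {n : ℕ} (a : NExp n) : ZExp n := Finsupp.mapRange (fun (m : ℕ) => (m : ℤ)) (by simp) a

/-- Total degree of a monomial. -/
def wdeg {n : ℕ} (a : NExp n) : ℕ := a.sum fun _ e => e

/-- `maxIdx a` is the 1-based index of the largest variable occurring in `x^a`
(`0` if `a = 0`, i.e. for the monomial `1`). -/
def maxIdx {n : ℕ} (a : NExp n) : ℕ := a.support.sup fun i => (i : ℕ) + 1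

/-- `max(u) ≤ min(y)`: every variable occurring in `y` has (1-based) index at least
`maxIdx u`.  (This is vacuously true when `y = 0`, matching `min(1) = +∞`.) -/
def maxLeMin {n : ℕ} (u y : NExp n) : Prop := ∀ j ∈ y.support, maxIdx u ≤ (j : ℕ) + 1

/-- Data exhibiting the ring `R` as the skew polynomial ring `k_q[x_1,…,x_n]`:
the monomials `x^a` form a `k`-basis, multiply according to the alternating
bicharacter `C`, and `C` is induced by the defining constants `q i j` with
`x_i x_j = q i j • (x_j x_i)`. -/
structure SkewPoly (k R : Type*) [CommRing k] [Ring R] [Algebra k R] (n : ℕ) : Type _ where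
  /-- the monomial `x^a` -/
  mon : NExp n → R
  /-- the bicharacter `C`, defined by `x^a x^b = C(x^a,x^b) x^{a+b}` -/
  C : ZExp n → ZExp n → kˣ
  /-- the defining constants `q_{i,j}` -/
  q : Fin n → Fin n → kˣ
  q_diag : ∀ i, q i i = 1
  q_symm : ∀ i j, q j i = (q i j)⁻¹
  /-- the monomials form a `k`-basis of `R` -/
  basis : Module.Basis (NExp n) k R
  basis_eq : ∀ a, basis a = mon a
  mon_zero : mon 0 = 1
  mon_mul : ∀ a b, mon a * mon b = ((C (zc a) (zc b) : kˣ) : k) • mon (a + b)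
  C_add_left : ∀ a b c, C (a + b) c = C a c * C b c
  C_add_right : ∀ a b c, C a (b + c) = C a b * C a c
  C_single : ∀ i j : Fin n,
    C (Finsupp.single i 1) (Finsupp.single j 1) = if j < i then q i j else 1

namespace SkewPoly

variable {k R : Type*} [CommRing k] [Ring R] [Algebra k R] {n : ℕ}

/-- The bicharacter `χ(a,b) = C(a,b)/C(b,a)`, so that `x^a x^b = χ(x^a,x^b) x^b x^a`. -/
def chi (S : SkewPoly k R n) (a b : ZExp n) : kˣ := S.C a b * (S.C b a)⁻¹

/-- The set of exponent vectors of the monomials lying in the right ideal `I`. -/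
def monSet (S : SkewPoly k R n) (I : Submodule Rᵐᵒᵖ R) : Set (NExp n) :=
  {w | S.mon w ∈ I}

/-- `I` is a monomial (right) ideal: it is generated by a set of monomials. -/
def IsMonomialIdeal (S : SkewPoly k R n) (I : Submodule Rᵐᵒᵖ R) : Prop :=
  ∃ T : Set (NExp n), I = Submodule.span Rᵐᵒᵖ (S.mon '' T)

/-- `I` is stable: for every monomial `w ∈ I` and every index `i < max(w)`,
the monomial `(x_i * w)/x_{max(w)}` lies in `I`. -/
def IsStable (S : SkewPoly k R n) (I : Submodule Rᵐᵒᵖ R) : Prop :=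
  ∀ w ∈ S.monSet I, ∀ i m : Fin n, (m : ℕ) + 1 = maxIdx w → i < m →
    w + Finsupp.single i 1 - Finsupp.single m 1 ∈ S.monSet I

/-- The canonical (minimal) monomial generating set `G(I)`: monomials of `I` that are
not proper multiples of other monomials of `I`. -/
def G (S : SkewPoly k R n) (I : Submodule Rᵐᵒᵖ R) : Set (NExp n) :=
  {u | u ∈ S.monSet I ∧ ∀ v ∈ S.monSet I, v ≤ u → v = u}

/-- `g` is the decomposition function of the stable ideal `I`: it sends a monomial
`w ∈ I` to the generator `u ∈ G(I)` of its canonical decomposition `w = u * y`,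
`max(u) ≤ min(y)`. -/
def IsDecompFun (S : SkewPoly k R n) (I : Submodule Rᵐᵒᵖ R)
    (g : NExp n → NExp n) : Prop :=
  ∀ w ∈ S.monSet I, g w ∈ S.G I ∧ g w ≤ w ∧ maxLeMin (g w) (w - g w)

end SkewPoly

section Complex

open Finsupp

/-- Symbols `e(i_1,…,i_q; u)`: a list of variable indices together with a monomial. -/
abbrev EKSym (n : ℕ) := List (Fin n) × NExp n

/-- The exponent vector of `x_σ = x_{i_1} ⋯ x_{i_q}`. -/
noncomputable def listMon {n : ℕ} (σ : List (Fin n)) : NExp n :=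
  (σ.map fun i => Finsupp.single i 1).sum

variable {k R : Type*} [CommRing k] [Ring R] [Algebra k R] {n : ℕ}

/-- Right action of `R` on the free right `R`-module `EKSym n →₀ R`. -/
noncomputable def rmul (f : EKSym n →₀ R) (r : R) : EKSym n →₀ R :=
  f.mapRange (· * r) (zero_mul r)

/-- A symbol `e(i_1,…,i_q;u)` is admissible for `I` when `u ∈ G(I)` and
`1 ≤ i_1 < ⋯ < i_q < max(u)`. -/
def Adm (S : SkewPoly k R n) (I : Submodule Rᵐᵒᵖ R) (s : EKSym n) : Prop :=
  s.1.Pairwise (· < ·) ∧ s.2 ∈ S.G I ∧ ∀ i ∈ s.1, (i : ℕ) + 1 < maxIdx s.2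

/-- The value of the differential `D` of the big complex `K_•(I)` on the symbol
`e(σ;u)`:
`D e(σ;u) = Σ_r (−1)^r e(σ_r;u) C(x_{σ_r}*u, x_{i_r})⁻¹ x_{i_r}
          − Σ_r (−1)^r e(σ_r;u_r) C(x_{σ_r}, y_r)⁻¹ y_r`,
where `u_r = g(x_{i_r} * u)` and `y_r = (x_{i_r} * u)/u_r`. -/
noncomputable def Dsym (S : SkewPoly k R n) (g : NExp n → NExp n) (s : EKSym n) :
    EKSym n →₀ R :=
  ∑ r : Fin s.1.length,
    ((-1 : k) ^ ((r : ℕ) + 1)) •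
      (Finsupp.single (s.1.eraseIdx (r : ℕ), s.2)
          ((((S.C (zc (listMon (s.1.eraseIdx (r : ℕ)) + s.2))
              (Finsupp.single (s.1.get r) (1 : ℤ)))⁻¹ : kˣ) : k) •
            S.mon (Finsupp.single (s.1.get r) 1))
       - Finsupp.single (s.1.eraseIdx (r : ℕ), g (Finsupp.single (s.1.get r) 1 + s.2))
          ((((S.C (zc (listMon (s.1.eraseIdx (r : ℕ))))
              (zc (Finsupp.single (s.1.get r) 1 + s.2
                    - g (Finsupp.single (s.1.get r) 1 + s.2))))⁻¹ : kˣ) : k) •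
            S.mon (Finsupp.single (s.1.get r) 1 + s.2
                    - g (Finsupp.single (s.1.get r) 1 + s.2))))

/-- The differential `D : K_•(I) → K_•(I)` extended right-`R`-linearly. -/
noncomputable def Dfun (S : SkewPoly k R n) (g : NExp n → NExp n)
    (f : EKSym n →₀ R) : EKSym n →₀ R :=
  f.sum fun s r => rmul (Dsym S g s) r

open scoped Classical in
/-- The value of the Eliahou–Kervaire differential `d` of `L_•(I)` on `e(σ;u)`:
as for `D`, but the second sum is restricted to `A(σ;u)`, i.e. to those `r` for
which `e(σ_r;u_r)` is admissible. -/
noncomputable def dsym (S : SkewPoly k R n) (I : Submodule Rᵐᵒᵖ R)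
    (g : NExp n → NExp n) (s : EKSym n) : EKSym n →₀ R :=
  ∑ r : Fin s.1.length,
    ((-1 : k) ^ ((r : ℕ) + 1)) •
      (Finsupp.single (s.1.eraseIdx (r : ℕ), s.2)
          ((((S.C (zc (listMon (s.1.eraseIdx (r : ℕ)) + s.2))
              (Finsupp.single (s.1.get r) (1 : ℤ)))⁻¹ : kˣ) : k) •
            S.mon (Finsupp.single (s.1.get r) 1))
       - if Adm S I (s.1.eraseIdx (r : ℕ), g (Finsupp.single (s.1.get r) 1 + s.2)) then
          Finsupp.single (s.1.eraseIdx (r : ℕ), g (Finsupp.single (s.1.get r) 1 + s.2))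
          ((((S.C (zc (listMon (s.1.eraseIdx (r : ℕ))))
              (zc (Finsupp.single (s.1.get r) 1 + s.2
                    - g (Finsupp.single (s.1.get r) 1 + s.2))))⁻¹ : kˣ) : k) •
            S.mon (Finsupp.single (s.1.get r) 1 + s.2
                    - g (Finsupp.single (s.1.get r) 1 + s.2)))
         else 0)

/-- The Eliahou–Kervaire differential `d : L_•(I) → L_•(I)` extended
right-`R`-linearly. -/
noncomputable def dfun (S : SkewPoly k R n) (I : Submodule Rᵐᵒᵖ R)
    (g : NExp n → NExp n) (f : EKSym n →₀ R) : EKSym n →₀ R :=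
  f.sum fun s r => rmul (dsym S I g s) r

open scoped Classical in
/-- The augmentation `ε : L_0(I) → R`, `e(∅;u) ↦ u`. -/
noncomputable def epsfun (S : SkewPoly k R n) (f : EKSym n →₀ R) : R :=
  f.sum fun s r => if s.1 = [] then S.mon s.2 * r else 0

/-- Membership in the subcomplex `J`: the last index satisfies `i_q ≥ max(u)`. -/
def JSym {n : ℕ} (s : EKSym n) : Prop :=
  ∃ m : Fin n, s.1.getLast? = some m ∧ maxIdx s.2 ≤ (m : ℕ) + 1

/-- Two integer exponent vectors have the same `G`-degree. -/
def GdegEq (S : SkewPoly k R n) (a b : ZExp n) : Prop := ∀ c, S.chi a c = S.chi b c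

end Complex

section Statements

open Finsupp

variable {k R : Type*} [CommRing k] [Ring R] [Algebra k R] {n : ℕ}


/-!
A symbol `e(σ;u)` lies in `J` exactly when its last index `m` satisfies `max(u) ≤ m`. Then
`x_m * u = u * x_m` is already the canonical decomposition, so `g(x_m * u) = u`, `y_q = x_m`, and
the two terms of the `q`-th summand of `D e(σ;u)` coincide. Deleting any other index keeps the
last index `m`, and `max(g(x_i * u)) ≤ max(x_i * u) ≤ m`, so all other summands stay in `J`.
For an admissible `e(σ;u)` no `e(σ_r;u)` lies in `J`, while `e(σ_r;u_r)` lies outside `J` exactly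
when it is admissible, so discarding the `J`-part of `D` leaves `d`.
-/

lemma zc_add (a b : NExp n) : zc (a + b) = zc a + zc b :=
  Finsupp.mapRange_add (fun x y => Nat.cast_add x y) a b

lemma maxIdx_le_iff {a : NExp n} {m : ℕ} : maxIdx a ≤ m ↔ ∀ j ∈ a.support, (j : ℕ) + 1 ≤ m :=
  Finset.sup_le_iff

lemma le_maxIdx {a : NExp n} {j : Fin n} (h : j ∈ a.support) : (j : ℕ) + 1 ≤ maxIdx a :=
  Finset.le_sup (f := fun i : Fin n => (i : ℕ) + 1) h

lemma maxIdx_mono {a b : NExp n} (h : a ≤ b) : maxIdx a ≤ maxIdx b :=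
  Finset.sup_mono (Finsupp.support_mono h)

lemma maxIdx_single_add_le {i : Fin n} {u : NExp n} {m : ℕ} (hi : (i : ℕ) + 1 ≤ m)
    (hu : maxIdx u ≤ m) : maxIdx (Finsupp.single i 1 + u) ≤ m := by
  classical
  rw [maxIdx_le_iff, Finsupp.support_add_eq_union, Finsupp.support_single _ one_ne_zero]
  intro j hj
  rcases Finset.mem_union.mp hj with h | h
  · rw [Finset.mem_singleton.mp h]; exact hi
  · exact maxIdx_le_iff.mp hu j h

lemma List.getLast?_eraseIdx_of_succ_lt {α : Type*} {l : List α} {r : ℕ}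
    (h : r + 1 < l.length) : (l.eraseIdx r).getLast? = l.getLast? := by
  rw [List.eraseIdx_eq_take_drop_succ, List.getLast?_append, List.getLast?_drop,
    if_neg (by omega)]
  cases hl : l.getLast? <;> simp_all

lemma jSym_iff_maxIdx_le {σ : List (Fin n)} (hσ : σ ≠ []) {u : NExp n} :
    JSym ((σ, u) : EKSym n) ↔ maxIdx u ≤ (σ.getLast hσ : ℕ) + 1 := by
  simp [JSym, List.getLast?_eq_some_getLast hσ]

lemma not_jSym_iff_forall_lt {σ : List (Fin n)} (hσ : σ.Pairwise (· ≤ ·)) {u : NExp n} :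
    ¬ JSym ((σ, u) : EKSym n) ↔ ∀ i ∈ σ, (i : ℕ) + 1 < maxIdx u := by
  rcases eq_or_ne σ [] with rfl | hne
  · simp [JSym]
  rw [jSym_iff_maxIdx_le hne, not_le]
  refine ⟨fun h i hi => lt_of_le_of_lt ?_ h, fun h => h _ (List.getLast_mem hne)⟩
  simpa using Fin.le_def.mp (hσ.rel_getLast hi)

namespace SkewPoly

variable (S : SkewPoly k R n)

lemma C_zero_left (c : ZExp n) : S.C 0 c = 1 := by
  simpa using S.C_add_left 0 0 c

lemma C_nsmul_left (m : ℕ) (a c : ZExp n) : S.C (m • a) c = S.C a c ^ m := by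
  induction m with
  | zero => simpa using S.C_zero_left c
  | succ m ih => rw [succ_nsmul, S.C_add_left, ih, pow_succ]

lemma C_zc_single_eq_one {u : NExp n} {i : Fin n} (h : maxIdx u ≤ (i : ℕ) + 1) :
    S.C (zc u) (Finsupp.single i 1) = 1 := by
  rw [maxIdx_le_iff] at h
  induction u using Finsupp.induction with
  | zero => exact S.C_zero_left _
  | single_add a b f ha hb ih =>
    rw [Finsupp.support_single_add ha hb, Finset.forall_mem_cons] at h
    have hsingle : zc (Finsupp.single a b) = b • Finsupp.single a (1 : ℤ) := by
      simp [zc, Finsupp.smul_single]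
    have hia : ¬ i < a := by rw [Fin.lt_def]; omega
    rw [zc_add, S.C_add_left, ih h.2, hsingle, S.C_nsmul_left, S.C_single, if_neg hia,
      one_pow, one_mul]

lemma add_mem_monSet {I : Submodule Rᵐᵒᵖ R} (a : NExp n) {w : NExp n} (hw : w ∈ S.monSet I) :
    a + w ∈ S.monSet I := by
  have h : S.mon (w + a) = S.mon w * ((((S.C (zc w) (zc a))⁻¹ : kˣ) : k) • S.mon a) := by
    rw [mul_smul_comm, S.mon_mul, smul_smul, Units.inv_mul, one_smul]
  show S.mon (a + w) ∈ I
  rw [add_comm, h]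
  exact I.smul_mem (MulOpposite.op _) hw

variable {S} {I : Submodule Rᵐᵒᵖ R} {g : NExp n → NExp n}

theorem IsDecompFun.apply_single_add (hg : S.IsDecompFun I g) {u : NExp n} (hu : u ∈ S.G I)
    {i : Fin n} (hi : maxIdx u ≤ (i : ℕ) + 1) : g (Finsupp.single i 1 + u) = u := by
  set w := Finsupp.single i 1 + u
  obtain ⟨hvG, hvw, hvy⟩ := hg w (S.add_mem_monSet _ hu.1)
  set v := g w
  suffices v ≤ u ∨ w ≤ v by
    rcases this with h | h
    · exact hu.2 v hvG.1 h
    · exact (hvG.2 u hu.1 (le_add_self.trans h)).symm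
  -- Otherwise `v` contains the whole power of `x_i` in `w`, so `max(v) ≥ i`; but the cofactor
  -- `w - v` only involves variables of index `≥ max(v)`, and `w` has none above `x_i`.
  by_contra! hcon
  obtain ⟨j, hj⟩ : ∃ j, u j < v j := by simpa [Finsupp.le_def] using hcon.1
  obtain ⟨t, ht⟩ : ∃ t, v t < w t := by simpa [Finsupp.le_def] using hcon.2
  have hvwj := Finsupp.le_def.mp hvw j
  obtain rfl : j = i := by
    by_contra hji
    simp [w, Ne.symm hji] at hvwj
    omega
  have hjv : (j : ℕ) + 1 ≤ maxIdx v := le_maxIdx (by simp; omega)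
  have htv : maxIdx v ≤ (t : ℕ) + 1 := hvy t (by simp; omega)
  rcases eq_or_ne t j with rfl | htj
  · simp [w] at hvwj ht
    omega
  · have hut : u t = 0 := by
      by_contra hut
      have := le_maxIdx (Finsupp.mem_support_iff.mpr hut)
      have := Fin.val_ne_of_ne htj
      omega
    simp [w, Ne.symm htj, hut] at ht

end SkewPoly

/-- The summand `e(τ;u) C(x_τ * u, x_i)⁻¹ x_i` of `D` belonging to the deleted index `i`. -/
noncomputable def koszulTerm (S : SkewPoly k R n) (τ : List (Fin n)) (i : Fin n) (u : NExp n) :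
    EKSym n →₀ R :=
  Finsupp.single (τ, u)
    ((((S.C (zc (listMon τ + u)) (Finsupp.single i (1 : ℤ)))⁻¹ : kˣ) : k) •
      S.mon (Finsupp.single i 1))

/-- The summand `e(τ;u_i) C(x_τ, y_i)⁻¹ y_i` of `D` belonging to the deleted index `i`, where
`u_i = g(x_i * u)` and `y_i = (x_i * u)/u_i`. -/
noncomputable def decompTerm (S : SkewPoly k R n) (g : NExp n → NExp n) (τ : List (Fin n))
    (i : Fin n) (u : NExp n) : EKSym n →₀ R :=
  Finsupp.single (τ, g (Finsupp.single i 1 + u))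
    ((((S.C (zc (listMon τ))
        (zc (Finsupp.single i 1 + u - g (Finsupp.single i 1 + u))))⁻¹ : kˣ) : k) •
      S.mon (Finsupp.single i 1 + u - g (Finsupp.single i 1 + u)))

lemma Dsym_eq_sum (S : SkewPoly k R n) (g : NExp n → NExp n) (σ : List (Fin n)) (u : NExp n) :
    Dsym S g (σ, u) = ∑ r : Fin σ.length, ((-1 : k) ^ ((r : ℕ) + 1)) •
      (koszulTerm S (σ.eraseIdx r) (σ.get r) u - decompTerm S g (σ.eraseIdx r) (σ.get r) u) :=
  rfl

open scoped Classical in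
lemma dsym_eq_sum (S : SkewPoly k R n) (I : Submodule Rᵐᵒᵖ R) (g : NExp n → NExp n)
    (σ : List (Fin n)) (u : NExp n) :
    dsym S I g (σ, u) = ∑ r : Fin σ.length, ((-1 : k) ^ ((r : ℕ) + 1)) •
      (koszulTerm S (σ.eraseIdx r) (σ.get r) u -
        if Adm S I (σ.eraseIdx r, g (Finsupp.single (σ.get r) 1 + u)) then
          decompTerm S g (σ.eraseIdx r) (σ.get r) u
        else 0) :=
  rfl

variable {S : SkewPoly k R n} {I : Submodule Rᵐᵒᵖ R} {g : NExp n → NExp n}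

theorem koszulTerm_eq_decompTerm (hg : S.IsDecompFun I g) {u : NExp n} (hu : u ∈ S.G I)
    {i : Fin n} (hi : maxIdx u ≤ (i : ℕ) + 1) (τ : List (Fin n)) :
    koszulTerm S τ i u = decompTerm S g τ i u := by
  rw [koszulTerm, decompTerm, hg.apply_single_add hu hi, add_tsub_cancel_right, zc_add,
    S.C_add_left, S.C_zc_single_eq_one hi, mul_one]
  simp [zc]

lemma mem_support_koszulTerm_sub_decompTerm {τ : List (Fin n)} {i : Fin n} {u : NExp n}
    {t : EKSym n} (ht : t ∈ (koszulTerm S τ i u - decompTerm S g τ i u).support) :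
    t = (τ, u) ∨ t = (τ, g (Finsupp.single i 1 + u)) := by
  classical
  rcases Finset.mem_union.mp (Finsupp.support_sub ht) with h | h
  · exact .inl (Finset.mem_singleton.mp (Finsupp.support_single_subset h))
  · exact .inr (Finset.mem_singleton.mp (Finsupp.support_single_subset h))

theorem jSym_of_mem_support_Dsym (hg : S.IsDecompFun I g) {σ : List (Fin n)} {u : NExp n}
    (hs : σ.Pairwise (· ≤ ·)) (hu : u ∈ S.G I) (hJ : JSym ((σ, u) : EKSym n)) {t : EKSym n}
    (ht : t ∈ (Dsym S g (σ, u)).support) : JSym t := by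
  have hσ : σ ≠ [] := by rintro rfl; simp [JSym] at hJ
  rw [jSym_iff_maxIdx_le hσ] at hJ
  rw [Dsym_eq_sum] at ht
  obtain ⟨r, -, ht⟩ := Finset.mem_biUnion.mp (Finsupp.support_finsetSum ht)
  have hr : σ.get r ≤ σ.getLast hσ := hs.rel_getLast (List.get_mem σ r)
  rcases (show (r : ℕ) + 1 < σ.length ∨ (r : ℕ) + 1 = σ.length by omega) with hlt | hlast
  · have hJτ {v : NExp n} : JSym (σ.eraseIdx r, v) ↔ JSym (σ, v) := by
      simp [JSym, List.getLast?_eraseIdx_of_succ_lt hlt]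
    have hw := S.add_mem_monSet (Finsupp.single (σ.get r) 1) hu.1
    rcases mem_support_koszulTerm_sub_decompTerm (Finsupp.support_smul ht) with rfl | rfl
    · exact hJτ.mpr ((jSym_iff_maxIdx_le hσ).mpr hJ)
    · refine hJτ.mpr ((jSym_iff_maxIdx_le hσ).mpr ((maxIdx_mono (hg _ hw).2.1).trans ?_))
      exact maxIdx_single_add_le (by simpa using Fin.le_def.mp hr) hJ
  · have hget : σ.get r = σ.getLast hσ := by
      simp [List.getLast_eq_getElem, ← hlast]
    rw [koszulTerm_eq_decompTerm hg hu (hget ▸ hJ), sub_self, smul_zero] at ht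
    simp at ht

lemma adm_iff_not_jSym {τ : List (Fin n)} (hτ : τ.Pairwise (· < ·)) {v : NExp n}
    (hv : v ∈ S.G I) : Adm S I (τ, v) ↔ ¬ JSym ((τ, v) : EKSym n) := by
  rw [not_jSym_iff_forall_lt (hτ.imp le_of_lt)]
  exact ⟨fun h => h.2.2, fun h => ⟨hτ, hv, h⟩⟩

open scoped Classical in
theorem dsym_eq_filter_Dsym (hg : S.IsDecompFun I g) {σ : List (Fin n)} {u : NExp n}
    (hs : Adm S I (σ, u)) : dsym S I g (σ, u) = (Dsym S g (σ, u)).filter (fun t => ¬ JSym t) := by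
  obtain ⟨hσ, hu, hσu⟩ := hs
  rw [dsym_eq_sum, Dsym_eq_sum, Finsupp.filter_sum]
  refine Finset.sum_congr rfl fun r _ => ?_
  have hτ : (σ.eraseIdx r).Pairwise (· < ·) := hσ.sublist (σ.eraseIdx_sublist r)
  have hw := S.add_mem_monSet (Finsupp.single (σ.get r) 1) hu.1
  have hadm := adm_iff_not_jSym hτ (hg _ hw).1
  have hkoszul : ¬ JSym ((σ.eraseIdx r, u) : EKSym n) :=
    (not_jSym_iff_forall_lt (hτ.imp le_of_lt)).mpr
      fun i hi => hσu i ((σ.eraseIdx_sublist r).subset hi)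
  rw [Finsupp.filter_smul, Finsupp.filter_sub, koszulTerm,
    Finsupp.filter_single_of_pos (fun t => ¬ JSym t) hkoszul]
  split_ifs with hA
  · rw [decompTerm, Finsupp.filter_single_of_pos (fun t => ¬ JSym t) (hadm.mp hA)]
  · rw [decompTerm, Finsupp.filter_single_of_neg (fun t => ¬ JSym t) (mt hadm.mpr hA)]

open scoped Classical in
theorem stmt5_general
    (S : SkewPoly k R n) (I : Submodule Rᵐᵒᵖ R)
    (g : NExp n → NExp n) (hg : S.IsDecompFun I g) :
    -- (a)  D(J) ⊆ J
    (∀ s : EKSym n, s.1.Pairwise (· ≤ ·) → s.2 ∈ S.G I → JSym s →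
      ∀ t ∈ (Dsym S g s).support, JSym t) ∧
    -- (b)  for e(σ;u) ∈ J, the q-th summand of D(e(σ;u)) vanishes
    (∀ (σ : List (Fin n)) (hσ : σ ≠ []) (u : NExp n), σ.Pairwise (· ≤ ·) → u ∈ S.G I →
      maxIdx u ≤ ((σ.getLast hσ : Fin n) : ℕ) + 1 →
      (Finsupp.single (σ.dropLast, u)
          ((((S.C (zc (listMon σ.dropLast + u))
              (Finsupp.single (σ.getLast hσ) (1 : ℤ)))⁻¹ : kˣ) : k) •
            S.mon (Finsupp.single (σ.getLast hσ) 1))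
        - Finsupp.single (σ.dropLast, g (Finsupp.single (σ.getLast hσ) 1 + u))
          ((((S.C (zc (listMon σ.dropLast))
              (zc (Finsupp.single (σ.getLast hσ) 1 + u
                - g (Finsupp.single (σ.getLast hσ) 1 + u))))⁻¹ : kˣ) : k) •
            S.mon (Finsupp.single (σ.getLast hσ) 1 + u
                - g (Finsupp.single (σ.getLast hσ) 1 + u)))
        : EKSym n →₀ R) = 0) ∧
    -- (c)  the differential of the quotient complex K/J is d, i.e. L = K/J
    (∀ s : EKSym n, Adm S I s →
      dsym S I g s = (Dsym S g s).filter (fun t => ¬ JSym t)) :=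
  ⟨fun _ hs hu hJ _ ht => jSym_of_mem_support_Dsym hg hs hu hJ ht,
    fun _ _ _ _ hu hmax => sub_eq_zero.mpr (koszulTerm_eq_decompTerm hg hu hmax _),
    fun _ hs => dsym_eq_filter_Dsym hg hs⟩

open scoped Classical in
theorem stmt5 [IsNoetherianRing k]
    (S : SkewPoly k R n) (I : Submodule Rᵐᵒᵖ R)
    (hmono : S.IsMonomialIdeal I) (hstab : S.IsStable I)
    (g : NExp n → NExp n) (hg : S.IsDecompFun I g) :
    -- (a)  D(J) ⊆ J
    (∀ s : EKSym n, s.1.Pairwise (· ≤ ·) → s.2 ∈ S.G I → JSym s →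
      ∀ t ∈ (Dsym S g s).support, JSym t) ∧
    -- (b)  for e(σ;u) ∈ J, the q-th summand of D(e(σ;u)) vanishes
    (∀ (σ : List (Fin n)) (hσ : σ ≠ []) (u : NExp n), σ.Pairwise (· ≤ ·) → u ∈ S.G I →
      maxIdx u ≤ ((σ.getLast hσ : Fin n) : ℕ) + 1 →
      (Finsupp.single (σ.dropLast, u)
          ((((S.C (zc (listMon σ.dropLast + u))
              (Finsupp.single (σ.getLast hσ) (1 : ℤ)))⁻¹ : kˣ) : k) •
            S.mon (Finsupp.single (σ.getLast hσ) 1))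
        - Finsupp.single (σ.dropLast, g (Finsupp.single (σ.getLast hσ) 1 + u))
          ((((S.C (zc (listMon σ.dropLast))
              (zc (Finsupp.single (σ.getLast hσ) 1 + u
                - g (Finsupp.single (σ.getLast hσ) 1 + u))))⁻¹ : kˣ) : k) •
            S.mon (Finsupp.single (σ.getLast hσ) 1 + u
                - g (Finsupp.single (σ.getLast hσ) 1 + u)))
        : EKSym n →₀ R) = 0) ∧
    -- (c)  the differential of the quotient complex K/J is d, i.e. L = K/J
    (∀ s : EKSym n, Adm S I s →
      dsym S I g s = (Dsym S g s).filter (fun t => ¬ JSym t)) :=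
  stmt5_general S I g hg

end Statements
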